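/- Let (a_0,…,a_{k−1}) be positive integers summing to m with k ≥ 3, and suppose max_i a_i − min_i a_i ≥ 2. Then there exist indices i ≠ j such that replacing a_i by a_i − 1 and a_j by a_j + 1 strictly increases Σ_t sin(2π·a_t/m). -/

import Mathlib

/-!
By `sin u + sin v = 2 sin ((u + v) / 2) cos ((u - v) / 2)`, moving one unit from a part `a i`
to a part `a j ≤ a i - 2` keeps the half-sum `π (a i + a j) / m`, which lies in `(0, π)` because
some third part is positive, and shrinks the half-difference inside `[0, π]`, where `cos` is
strictly decreasing.
-/

open Real

theorem sin_add_add_sin_sub_lt {s d d' : ℝ} (hs₀ : 0 < s) (hsπ : s < π) (hd' : 0 ≤ d')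
    (hd'd : d' < d) (hdπ : d ≤ π) :
    sin (s + d) + sin (s - d) < sin (s + d') + sin (s - d') := by
  have hsin : 0 < sin s := sin_pos_of_pos_of_lt_pi hs₀ hsπ
  have hcos : cos d < cos d' := cos_lt_cos_of_nonneg_of_le_pi hd' hdπ hd'd
  simp only [sin_add, sin_sub]
  nlinarith

theorem sin_two_pi_div_add_sin_lt_of_transfer {m A B : ℝ} (hB : 0 ≤ B) (hAB : B + 2 ≤ A)
    (hm : A + B < m) :
    sin (2 * π * A / m) + sin (2 * π * B / m) <
      sin (2 * π * (A - 1) / m) + sin (2 * π * (B + 1) / m) := by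
  have hm₀ : 0 < m := by linarith
  have key := sin_add_add_sin_sub_lt (s := π * (A + B) / m) (d := π * (A - B) / m)
    (d' := π * (A - B - 2) / m) (div_pos (by nlinarith [pi_pos]) hm₀)
    (by rw [div_lt_iff₀ hm₀]; nlinarith [pi_pos])
    (div_nonneg (mul_nonneg pi_pos.le (by linarith)) hm₀.le)
    (div_lt_div_of_pos_right (by linarith [pi_pos]) hm₀)
    (by rw [div_le_iff₀ hm₀]; nlinarith [pi_pos])
  convert key using 2 <;> congr 1 <;> field_simp <;> ring

section
variable {ι α M : Type*} [Fintype ι] [DecidableEq ι] [AddCommGroup M]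

theorem Fintype.sum_comp_update (g : α → M) (a : ι → α) (i : ι) (x : α) :
    ∑ t, g (Function.update a i x t) = ∑ t, g (a t) - g (a i) + g x := by
  simp_rw [Function.apply_update (fun _ => g)]
  rw [Finset.sum_update_of_mem (Finset.mem_univ i),
    Finset.sum_eq_sum_sdiff_singleton_add (Finset.mem_univ i)]
  abel

theorem Fintype.sum_comp_update_update (g : α → M) (a : ι → α) {i j : ι} (hij : i ≠ j)
    (x y : α) :
    ∑ t, g (Function.update (Function.update a i x) j y t) =
      ∑ t, g (a t) - (g (a i) + g (a j)) + (g x + g y) := by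
  rw [Fintype.sum_comp_update, Fintype.sum_comp_update, Function.update_of_ne hij.symm]
  abel
end

theorem Fintype.add_lt_sum_of_pos {ι : Type*} [Fintype ι] {a : ι → ℕ} (ha : ∀ t, 0 < a t)
    (hι : 2 < Fintype.card ι) {i j : ι} (hij : i ≠ j) : a i + a j < ∑ t, a t := by
  classical
  obtain ⟨t, ht⟩ : ({i, j}ᶜ : Finset ι).Nonempty := by
    rw [← Finset.card_pos, Finset.card_compl, Finset.card_pair hij]; omega
  have hti : t ≠ i := by simp_all
  have htj : t ≠ j := by simp_all
  calc a i + a j < a i + a j + a t := by linarith [ha t]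
    _ = ∑ s ∈ {t, i, j}, a s := by simp [hti, htj, hij]; ring
    _ ≤ ∑ s, a s := Finset.sum_le_univ_sum_of_nonneg (fun _ => Nat.zero_le _)

theorem stmt_5 (m k : ℕ) (hk : 3 ≤ k)
    (a : Fin k → ℕ) (hpos : ∀ i, 0 < a i) (hsum : ∑ i, a i = m)
    (hgap : ∃ i j, a j + 2 ≤ a i) :
    ∃ i j, i ≠ j ∧
      ∑ t, sin (2 * π * a t / m) <
        ∑ t, sin (2 * π *
          (Function.update (Function.update a i (a i - 1)) j (a j + 1) t) / m) := by
  obtain ⟨i, j, hgap⟩ := hgap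
  have hij : i ≠ j := by rintro rfl; omega
  refine ⟨i, j, hij, ?_⟩
  have hm : a i + a j < m :=
    hsum ▸ Fintype.add_lt_sum_of_pos hpos (by simp only [Fintype.card_fin]; omega) hij
  have hgain := sin_two_pi_div_add_sin_lt_of_transfer (m := m) (A := a i) (B := a j)
    (Nat.cast_nonneg _) (by exact_mod_cast hgap) (by exact_mod_cast hm)
  rw [Fintype.sum_comp_update_update (fun n : ℕ => sin (2 * π * n / m)) a hij]
  push_cast [Nat.cast_sub (by omega : 1 ≤ a i)]
  linarith
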